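/- arXiv:2507.16448 — 3 statements merged into one kernel-verified Lean document; each statement's English description precedes it below -/
import Mathlib

section
/- (Skip-free power law for upper passage times.) For v ∈ (0,1] and a ∈ ℕ define the N×N matrix G_v(a) := Σ_{n=0}^∞ v^n · M(n,a), where M(n,a) is the matrix whose (i,j)-entry is the probability of the event {τ_a^+ = n, J_n = j} in the model with initial distribution δ_i and initial surplus x = 0 (the series converges entrywise since Σ_n M(n,a) is substochastic). Then for every v ∈ (0,1] and every a ∈ ℕ, G_v(a) = (G_v(1))^a. -/
open scoped BigOperators

noncomputable section

namespace CMB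

/-- The weight that the compound Markov binomial model with horizon `n`, jump matrices `Λ`
and initial distribution `μ` assigns to the path `(J, C)`. -/
def pathWeight {N : ℕ} (Λ : ℕ → Matrix (Fin N) (Fin N) ℝ) (μ : Fin N → ℝ) (n : ℕ)
    (J : Fin (n + 1) → Fin N) (C : Fin n → ℕ) : ℝ :=
  μ (J 0) * ∏ k : Fin n, Λ (C k) (J k.castSucc) (J k.succ)

/-- The probability of the event `A` in the horizon-`n` compound Markov binomial model:
the sum of the weights of the paths belonging to the event. -/
def prob {N : ℕ} (Λ : ℕ → Matrix (Fin N) (Fin N) ℝ) (μ : Fin N → ℝ) (n : ℕ)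
    (A : (Fin (n + 1) → Fin N) → (Fin n → ℕ) → Prop) : ℝ :=
  ∑' p : { p : (Fin (n + 1) → Fin N) × (Fin n → ℕ) // A p.1 p.2 },
    pathWeight Λ μ n p.1.1 p.1.2

/-- Partial sums `S_k = C_1 + ⋯ + C_k` of the claims (`C i` is claim number `i+1`). -/
def S {n : ℕ} (C : Fin n → ℕ) (k : ℕ) : ℕ :=
  ∑ j : Fin n, if (j : ℕ) < k then C j else 0

/-- Dirac initial distribution `δ_i`. -/
def delta {N : ℕ} (i : Fin N) : Fin N → ℝ := fun i' => if i' = i then 1 else 0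

/-- `hitM Λ n a i j` is the probability, in the model with initial distribution `δ_i` and
initial surplus `x = 0` (so `X_k = k - S_k`), of the event `{τ_a^+ = n, J_n = j}`,
i.e. `X_k < a` for all `k < n` and `X_n ≥ a` and `J_n = j`. -/
def hitM {N : ℕ} (Λ : ℕ → Matrix (Fin N) (Fin N) ℝ) (n a : ℕ) : Matrix (Fin N) (Fin N) ℝ :=
  fun i j => prob Λ (delta i) n fun J C =>
    (∀ k, k < n → (k : ℤ) - S C k < (a : ℤ)) ∧ (a : ℤ) ≤ (n : ℤ) - S C n ∧ J (Fin.last n) = j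

/-- `Gser Λ v a` is the matrix `G_v(a) = Σ_{n=0}^∞ v^n · M(n,a)`, entrywise. -/
def Gser {N : ℕ} (Λ : ℕ → Matrix (Fin N) (Fin N) ℝ) (v : ℝ) (a : ℕ) :
    Matrix (Fin N) (Fin N) ℝ := fun i j => ∑' n : ℕ, v ^ n * hitM Λ n a i j

open scoped Classical

variable {N : ℕ}

abbrev PathT (N n : ℕ) := (Fin (n+1) → Fin N) × (Fin n → ℕ)

def wE (Λ : ℕ → Matrix (Fin N) (Fin N) ℝ) (n : ℕ) (i : Fin N) (p : PathT N n) : ENNReal :=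
  (if p.1 0 = i then 1 else 0) *
    ∏ k : Fin n, ENNReal.ofReal (Λ (p.2 k) (p.1 k.castSucc) (p.1 k.succ))

def Ev (a : ℕ) (j : Fin N) {n : ℕ} (p : PathT N n) : Prop :=
  (∀ k, k < n → (k : ℤ) - S p.2 k < (a : ℤ)) ∧
    (a : ℤ) ≤ (n : ℤ) - S p.2 n ∧ p.1 (Fin.last n) = j

def tauEv (a m : ℕ) {n : ℕ} (C : Fin n → ℕ) : Prop :=
  (∀ k, k < m → (k : ℤ) - S C k < (a : ℤ)) ∧ (a : ℤ) ≤ (m : ℤ) - S C m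

def hitME (Λ : ℕ → Matrix (Fin N) (Fin N) ℝ) (n a : ℕ) (i j : Fin N) : ENNReal :=
  ∑' p : PathT N n, if Ev a j p then wE Λ n i p else 0

def GE (Λ : ℕ → Matrix (Fin N) (Fin N) ℝ) (x : ENNReal) (a : ℕ) (i j : Fin N) : ENNReal :=
  ∑' n : ℕ, x ^ n * hitME Λ n a i j

/-! ### S lemmas -/

lemma S_zero {n : ℕ} (C : Fin n → ℕ) : S C 0 = 0 := by simp [S]

lemma S_mono {n : ℕ} (C : Fin n → ℕ) {k k' : ℕ} (h : k ≤ k') : S C k ≤ S C k' := by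
  refine Finset.sum_le_sum fun j _ => ?_
  split_ifs with h1 h2 <;> omega

/-! ### splitting of paths -/

def fstP {m l : ℕ} (p : PathT N (m+l)) : PathT N m :=
  (fun t => p.1 ⟨t.1, by have := t.isLt; omega⟩, fun k => p.2 ⟨k.1, by have := k.isLt; omega⟩)

def sndP {m l : ℕ} (p : PathT N (m+l)) : PathT N l :=
  (fun t => p.1 ⟨m + t.1, by have := t.isLt; omega⟩,
   fun k => p.2 ⟨m + k.1, by have := k.isLt; omega⟩)

lemma S_fstP {m l : ℕ} (p : PathT N (m+l)) {k : ℕ} (hk : k ≤ m) :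
    S (fstP p).2 k = S p.2 k := by
  simp only [S, fstP, Fin.sum_univ_add, Fin.coe_castAdd, Fin.coe_natAdd]
  have h2 : ∀ j : Fin l, (if m + (j : ℕ) < k then p.2 (Fin.natAdd m j) else 0) = 0 :=
    fun j => if_neg (by omega)
  rw [Finset.sum_congr rfl fun j _ => h2 j, Finset.sum_const_zero, add_zero]
  refine Finset.sum_congr rfl fun j _ => ?_
  congr 1

lemma S_sndP {m l : ℕ} (p : PathT N (m+l)) (t : ℕ) :
    S p.2 (m + t) = S p.2 m + S (sndP p).2 t := by
  simp only [S, sndP, Fin.sum_univ_add, Fin.coe_castAdd, Fin.coe_natAdd]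
  have e1 : ∀ j : Fin m, (if (j : ℕ) < m + t then p.2 (Fin.castAdd l j) else 0)
      = p.2 (Fin.castAdd l j) := fun j => if_pos (by omega)
  have e2 : ∀ j : Fin m, (if (j : ℕ) < m then p.2 (Fin.castAdd l j) else 0)
      = p.2 (Fin.castAdd l j) := fun j => if_pos (by omega)
  have e4 : ∀ j : Fin l, (if m + (j : ℕ) < m then p.2 (Fin.natAdd m j) else 0) = 0 :=
    fun j => if_neg (by omega)
  rw [Finset.sum_congr rfl fun j _ => e1 j, Finset.sum_congr rfl fun j _ => e2 j,
    Finset.sum_congr rfl fun j _ => e4 j, Finset.sum_const_zero, add_zero]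
  congr 1
  refine Finset.sum_congr rfl fun j _ => ?_
  exact if_congr (by omega) rfl rfl


lemma fstP_last {m l : ℕ} (p : PathT N (m+l)) :
    (fstP p).1 (Fin.last m) = p.1 ⟨m, by omega⟩ := rfl

lemma sndP_zero {m l : ℕ} (p : PathT N (m+l)) :
    (sndP p).1 0 = p.1 ⟨m, by omega⟩ := by
  simp only [sndP]
  exact congrArg p.1 (Fin.ext (by simp))

lemma sndP_last {m l : ℕ} (p : PathT N (m+l)) :
    (sndP p).1 (Fin.last l) = p.1 (Fin.last (m+l)) := by
  simp only [sndP]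
  exact congrArg p.1 (Fin.ext (by simp [Fin.last]))

/-- skip-free: the surplus can increase by at most one per step. -/
lemma skip_le {n : ℕ} (C : Fin n → ℕ) {m : ℕ} (a : ℕ)
    (hm : ∀ k, k < m → (k : ℤ) - S C k < (a : ℤ)) : (m : ℤ) - S C m ≤ (a : ℤ) := by
  cases m with
  | zero => simp [S_zero]
  | succ m' =>
    have h1 := hm m' (by omega)
    have h2 : S C m' ≤ S C (m'+1) := S_mono C (by omega)
    push_cast
    push_cast at h1
    omega

/-- The key path-splitting equivalence of events. -/
lemma ev_equiv {m l : ℕ} (a : ℕ) (j : Fin N) (p : PathT N (m+l)) :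
    (Ev (a+1) j p ∧ tauEv a m p.2) ↔ (tauEv a m (fstP p).2 ∧ Ev 1 j (sndP p)) := by
  have hS : ∀ k, k ≤ m → S (fstP p).2 k = S p.2 k := fun k hk => S_fstP p hk
  have hS2 : ∀ t, S p.2 (m + t) = S p.2 m + S (sndP p).2 t := S_sndP p
  constructor
  · rintro ⟨⟨h1, h2, h3⟩, h4, h5⟩
    have hXm : (m : ℤ) - S p.2 m ≤ (a : ℤ) := skip_le p.2 a h4
    refine ⟨⟨?_, ?_⟩, ?_, ?_, ?_⟩
    · intro k hk; rw [hS k (by omega)]; exact h4 k hk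
    · rw [hS m le_rfl]; exact h5
    · intro t ht
      have := h1 (m + t) (by omega)
      have e := hS2 t
      push_cast at this e ⊢
      omega
    · have e := hS2 l
      push_cast at h2 e ⊢
      omega
    · rw [sndP_last]; exact h3
  · rintro ⟨⟨h4, h5⟩, e1, e2, e3⟩
    rw [hS m le_rfl] at h5
    have h4' : ∀ k, k < m → (k : ℤ) - S p.2 k < (a : ℤ) := by
      intro k hk; rw [← hS k (by omega)]; exact h4 k hk
    have hXm : (m : ℤ) - S p.2 m ≤ (a : ℤ) := skip_le p.2 a h4'
    refine ⟨⟨?_, ?_, ?_⟩, h4', h5⟩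
    · intro k hk
      by_cases hkm : k < m
      · have := h4' k hkm; push_cast at this ⊢; omega
      · obtain ⟨t, rfl⟩ : ∃ t, k = m + t := ⟨k - m, by omega⟩
        have ht : t < l := by omega
        have := e1 t ht
        have e := hS2 t
        push_cast at this e ⊢
        omega
    · have e := hS2 l
      push_cast at e2 e ⊢
      omega
    · rw [← sndP_last]; exact e3


variable {Λ : ℕ → Matrix (Fin N) (Fin N) ℝ}

lemma wE_split {m l : ℕ} (i : Fin N) (p : PathT N (m+l)) :
    wE Λ (m+l) i p = wE Λ m i (fstP p) *
      ∏ k : Fin l, ENNReal.ofReal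
        (Λ ((sndP p).2 k) ((sndP p).1 k.castSucc) ((sndP p).1 k.succ)) := by
  have e0 : (fstP (N := N) p).1 0 = p.1 0 := congrArg p.1 (Fin.ext (by simp [fstP]))
  simp only [wE]
  rw [Fin.prod_univ_add, ← mul_assoc, e0]
  rfl

lemma psi_inj {m l : ℕ} :
    Function.Injective (fun p : PathT N (m+l) => (fstP p, sndP p)) := by
  intro p q h
  simp only [Prod.ext_iff] at h
  obtain ⟨⟨hJ1, hC1⟩, hJ2, hC2⟩ := h
  refine Prod.ext ?_ ?_
  · funext t
    by_cases ht : t.1 < m + 1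
    · exact congrFun hJ1 ⟨t.1, ht⟩
    · have e : t = (⟨m + (t.1 - m), by have := t.isLt; omega⟩ : Fin (m+l+1)) :=
        Fin.ext (by simp; omega)
      rw [e]
      exact congrFun hJ2 ⟨t.1 - m, by have := t.isLt; omega⟩
  · funext k
    by_cases hk : k.1 < m
    · exact congrFun hC1 ⟨k.1, hk⟩
    · have e : k = (⟨m + (k.1 - m), by have := k.isLt; omega⟩ : Fin (m+l)) :=
        Fin.ext (by simp; omega)
      rw [e]
      exact congrFun hC2 ⟨k.1 - m, by have := k.isLt; omega⟩

lemma glue {m l : ℕ} (q1 : PathT N m) (q2 : PathT N l)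
    (hmatch : q2.1 0 = q1.1 (Fin.last m)) :
    ∃ p : PathT N (m+l), fstP p = q1 ∧ sndP p = q2 := by
  refine ⟨(fun t => if h : t.1 < m+1 then q1.1 ⟨t.1, h⟩
              else q2.1 ⟨t.1 - m, by have := t.isLt; omega⟩,
           fun k => if h : k.1 < m then q1.2 ⟨k.1, h⟩
              else q2.2 ⟨k.1 - m, by have := k.isLt; omega⟩), ?_, ?_⟩
  · refine Prod.ext ?_ ?_
    · funext t
      show (if h : (t : ℕ) < m+1 then _ else _) = _
      rw [dif_pos t.isLt]
    · funext k
      show (if h : (k : ℕ) < m then _ else _) = _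
      rw [dif_pos k.isLt]
  · refine Prod.ext ?_ ?_
    · funext t
      show (if h : m + (t : ℕ) < m+1 then _ else _) = _
      by_cases ht : m + (t : ℕ) < m + 1
      · rw [dif_pos ht]
        have ht0 : (t : ℕ) = 0 := by omega
        have e2 : q2.1 t = q2.1 0 := congrArg q2.1 (Fin.ext (by simp [ht0]))
        rw [e2, hmatch]
        exact congrArg q1.1 (Fin.ext (by simp [Fin.last, ht0]))
      · rw [dif_neg ht]
        exact congrArg q2.1 (Fin.ext (by simp))
    · funext k
      show (if h : m + (k : ℕ) < m then _ else _) = _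
      rw [dif_neg (by omega)]
      exact congrArg q2.2 (Fin.ext (by simp))

lemma tsum_split {m l : ℕ} (i : Fin N)
    (A : PathT N m → Prop) (B : PathT N l → Prop) :
    (∑' p : PathT N (m+l), if A (fstP p) ∧ B (sndP p) then wE Λ (m+l) i p else 0)
    = ∑ r : Fin N,
        (∑' p1 : PathT N m, if A p1 ∧ p1.1 (Fin.last m) = r then wE Λ m i p1 else 0) *
        (∑' p2 : PathT N l, if B p2 then wE Λ l r p2 else 0) := by
  set W2 : PathT N l → ENNReal := fun q2 =>
    ∏ k : Fin l, ENNReal.ofReal (Λ (q2.2 k) (q2.1 k.castSucc) (q2.1 k.succ)) with hW2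
  set G : PathT N m × PathT N l → ENNReal := fun q =>
    if A q.1 ∧ B q.2 ∧ q.2.1 0 = q.1.1 (Fin.last m) then wE Λ m i q.1 * W2 q.2
    else 0 with hG
  have step1 : (∑' p : PathT N (m+l), if A (fstP p) ∧ B (sndP p) then wE Λ (m+l) i p else 0)
      = ∑' q, G q := by
    rw [← Function.Injective.tsum_eq (g := fun p : PathT N (m+l) => (fstP p, sndP p))
      psi_inj (f := G) ?_]
    · refine tsum_congr fun p => ?_
      have hmm : (sndP (N := N) p).1 0 = (fstP p).1 (Fin.last m) := by
        rw [sndP_zero, fstP_last]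
      by_cases hA : A (fstP p)
      · by_cases hB : B (sndP p)
        · simp only [hG]
          rw [if_pos ⟨hA, hB⟩, if_pos ⟨hA, hB, hmm⟩]
          exact wE_split i p
        · simp [hG, hA, hB]
      · simp [hG, hA]
    · intro q hq
      rcases q with ⟨q1, q2⟩
      simp only [Function.mem_support, hG] at hq
      have hmatch : q2.1 0 = q1.1 (Fin.last m) := by
        by_contra hc
        exact hq (if_neg (by rintro ⟨-, -, h⟩; exact hc h))
      obtain ⟨p, hp1, hp2⟩ := glue q1 q2 hmatch
      exact ⟨p, by simp [hp1, hp2]⟩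
  have step2 : ∀ r : Fin N,
      (∑' p1 : PathT N m, if A p1 ∧ p1.1 (Fin.last m) = r then wE Λ m i p1 else 0) *
      (∑' p2 : PathT N l, if B p2 then wE Λ l r p2 else 0)
      = ∑' q : PathT N m × PathT N l,
          (if A q.1 ∧ q.1.1 (Fin.last m) = r then wE Λ m i q.1 else 0) *
          (if B q.2 then wE Λ l r q.2 else 0) := by
    intro r
    set f : PathT N m → ENNReal :=
      fun p1 => if A p1 ∧ p1.1 (Fin.last m) = r then wE Λ m i p1 else 0 with hf
    set g : PathT N l → ENNReal :=
      fun p2 => if B p2 then wE Λ l r p2 else 0 with hg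
    calc (∑' p1, f p1) * (∑' p2, g p2)
        = ∑' p1, f p1 * (∑' p2, g p2) := ENNReal.tsum_mul_right.symm
      _ = ∑' p1, ∑' p2, f p1 * g p2 := tsum_congr fun p1 => ENNReal.tsum_mul_left.symm
      _ = ∑' q : PathT N m × PathT N l, f q.1 * g q.2 :=
          (ENNReal.tsum_prod' (f := fun q : PathT N m × PathT N l => f q.1 * g q.2)).symm
  rw [step1, Finset.sum_congr rfl fun r _ => step2 r,
    ← Summable.tsum_finsetSum fun r _ => ENNReal.summable]
  refine tsum_congr fun q => ?_
  rw [Finset.sum_eq_single (q.1.1 (Fin.last m))]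
  · have hw : wE Λ l (q.1.1 (Fin.last m)) q.2
        = (if q.2.1 0 = q.1.1 (Fin.last m) then 1 else 0) * W2 q.2 := rfl
    by_cases hA : A q.1 <;> by_cases hB : B q.2 <;>
      by_cases hq0 : q.2.1 0 = q.1.1 (Fin.last m) <;>
      simp [hG, hA, hB, hq0, hw, mul_assoc]
  · intro r _ hr
    rw [if_neg (by rintro ⟨-, h⟩; exact hr h.symm), zero_mul]
  · intro h
    exact absurd (Finset.mem_univ _) h


variable {P : Matrix (Fin N) (Fin N) ℝ}

lemma row1 (hΛ : ∀ m i j, 0 ≤ Λ m i j) (hP : ∀ i j, HasSum (fun m => Λ m i j) (P i j))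
    (hPstoch : ∀ i, ∑ j, P i j = 1) (r : Fin N) :
    ∑' q : ℕ × Fin N, ENNReal.ofReal (Λ q.1 r q.2) = 1 := by
  rw [ENNReal.tsum_prod']
  rw [tsum_congr fun m => tsum_fintype fun j : Fin N => ENNReal.ofReal (Λ m r j)]
  rw [Summable.tsum_finsetSum fun j _ => ENNReal.summable]
  have h2 : ∀ j : Fin N, (∑' m, ENNReal.ofReal (Λ m r j)) = ENNReal.ofReal (P r j) := by
    intro j
    rw [← ENNReal.ofReal_tsum_of_nonneg (fun m => hΛ m r j) (hP r j).summable,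
      (hP r j).tsum_eq]
  have hPn : ∀ j, (0:ℝ) ≤ P r j := by
    intro j
    rw [← (hP r j).tsum_eq]
    exact tsum_nonneg fun m => hΛ m r j
  rw [Finset.sum_congr rfl fun j _ => h2 j,
    ← ENNReal.ofReal_sum_of_nonneg fun j _ => hPn j, hPstoch r, ENNReal.ofReal_one]

lemma mass1 (hΛ : ∀ m i j, 0 ≤ Λ m i j) (hP : ∀ i j, HasSum (fun m => Λ m i j) (P i j))
    (hPstoch : ∀ i, ∑ j, P i j = 1) (r : Fin N) :
    ∑' p : PathT N 1, wE Λ 1 r p = 1 := by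
  set Φ : Fin N × (ℕ × Fin N) → PathT N 1 :=
    fun q => (fun t => if (t : ℕ) = 0 then q.1 else q.2.2, fun _ => q.2.1) with hΦ
  have hsurj : ∀ p : PathT N 1, ∃ q, Φ q = p := by
    intro p
    refine ⟨(p.1 0, (p.2 0, p.1 1)), Prod.ext (funext fun t => ?_) (funext fun k => ?_)⟩
    · show (if (t : ℕ) = 0 then p.1 0 else p.1 1) = p.1 t
      by_cases ht : (t : ℕ) = 0
      · rw [if_pos ht]
        exact congrArg p.1 (Fin.ext (by simp [ht]))
      · rw [if_neg ht]
        exact congrArg p.1 (Fin.ext (by have := t.isLt; simp; omega))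
    · show p.2 0 = p.2 k
      exact congrArg p.2 (Fin.ext (by simp))
  have hinj : Function.Injective Φ := by
    intro x y h
    simp only [hΦ, Prod.ext_iff] at h
    obtain ⟨hJ, hC⟩ := h
    have h0 := congrFun hJ 0
    have h1 := congrFun hJ 1
    have hc := congrFun hC 0
    simp at h0 h1
    refine Prod.ext ?_ (Prod.ext ?_ ?_) <;> simp_all
  have hval : ∀ q : Fin N × (ℕ × Fin N),
      wE Λ 1 r (Φ q) = (if q.1 = r then 1 else 0) * ENNReal.ofReal (Λ q.2.1 q.1 q.2.2) := by
    intro q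
    simp [wE, hΦ, Fin.prod_univ_one]
  rw [← Function.Injective.tsum_eq hinj (f := wE Λ 1 r)
    (fun p _ => hsurj p)]
  rw [tsum_congr hval, ENNReal.tsum_prod',
    tsum_congr fun j0 => ENNReal.tsum_mul_left (a := if j0 = r then 1 else 0),
    tsum_fintype]
  rw [Finset.sum_eq_single r]
  · rw [if_pos rfl, one_mul]
    exact row1 hΛ hP hPstoch r
  · intro b _ hb
    rw [if_neg hb, zero_mul]
  · intro h
    exact absurd (Finset.mem_univ _) h

lemma mass (hΛ : ∀ m i j, 0 ≤ Λ m i j) (hP : ∀ i j, HasSum (fun m => Λ m i j) (P i j))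
    (hPstoch : ∀ i, ∑ j, P i j = 1) :
    ∀ n (i : Fin N), ∑' p : PathT N n, wE Λ n i p = 1 := by
  intro n
  induction n with
  | zero =>
    intro i
    rw [tsum_eq_single ((fun _ => i, fun k => k.elim0) : PathT N 0)]
    · simp [wE]
    · intro p hp
      simp only [wE, Fin.prod_univ_zero, mul_one]
      rw [if_neg]
      intro h0
      apply hp
      refine Prod.ext (funext fun t => ?_) (funext fun k => k.elim0)
      have ht : t = 0 := Fin.ext (by have := t.isLt; omega)
      rw [ht, h0]
  | succ n ih =>
    intro i
    have hs := tsum_split (Λ := Λ) (m := n) (l := 1) i (fun _ => True) (fun _ => True)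
    simp only [true_and, and_true, if_true] at hs
    rw [hs]
    rw [Finset.sum_congr rfl fun r _ => by rw [mass1 hΛ hP hPstoch r, mul_one]]
    rw [← Summable.tsum_finsetSum fun r _ => ENNReal.summable]
    rw [tsum_congr fun p1 => ?_]
    · exact ih i
    · rw [Finset.sum_congr rfl fun r _ => ?_]
      · rw [Finset.sum_ite_eq Finset.univ (p1.1 (Fin.last n)) fun _ => wE Λ n i p1,
          if_pos (Finset.mem_univ _)]
      · exact if_congr (by simp [eq_comm]) rfl rfl


/-! ### consistency and boundedness -/

def EvC (n a : ℕ) (j : Fin N) {L : ℕ} (p : PathT N L) : Prop :=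
  (∀ k, k < n → (k : ℤ) - S p.2 k < (a : ℤ)) ∧ (a : ℤ) ≤ (n : ℤ) - S p.2 n ∧
    ∃ h : n < L + 1, p.1 ⟨n, h⟩ = j

lemma hitME_consis (hΛ : ∀ m i j, 0 ≤ Λ m i j)
    (hP : ∀ i j, HasSum (fun m => Λ m i j) (P i j))
    (hPstoch : ∀ i, ∑ j, P i j = 1) (a : ℕ) (i j : Fin N) {n L : ℕ} (hnL : n ≤ L) :
    hitME Λ n a i j = ∑' p : PathT N L, if EvC n a j p then wE Λ L i p else 0 := by
  obtain ⟨l, rfl⟩ : ∃ l, L = n + l := ⟨L - n, by omega⟩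
  have hev : ∀ p : PathT N (n+l), EvC n a j p ↔ Ev a j (fstP p) := by
    intro p
    constructor
    · rintro ⟨h1, h2, h3, h4⟩
      refine ⟨?_, ?_, ?_⟩
      · intro k hk; rw [S_fstP p (by omega)]; exact h1 k hk
      · rw [S_fstP p le_rfl]; exact h2
      · rw [fstP_last]; exact h4
    · rintro ⟨h1, h2, h3⟩
      refine ⟨?_, ?_, by omega, ?_⟩
      · intro k hk; rw [← S_fstP p (le_of_lt hk)]; exact h1 k hk
      · rw [← S_fstP p le_rfl]; exact h2
      · rw [← fstP_last]; exact h3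
  have e1 : (∑' p : PathT N (n+l), if EvC n a j p then wE Λ (n+l) i p else 0)
      = ∑' p : PathT N (n+l), if Ev a j (fstP p) then wE Λ (n+l) i p else 0 :=
    tsum_congr fun p => if_congr (hev p) rfl rfl
  have hs := tsum_split (Λ := Λ) (m := n) (l := l) i (Ev a j) (fun _ => True)
  simp only [and_true, if_true] at hs
  rw [e1, hs]
  rw [Finset.sum_congr rfl fun r _ => by
    rw [mass hΛ hP hPstoch l r, mul_one]]
  rw [← Summable.tsum_finsetSum fun r _ => ENNReal.summable]
  refine Eq.symm (tsum_congr fun p1 => ?_)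
  show (∑ r : Fin N, if Ev a j p1 ∧ p1.1 (Fin.last n) = r then wE Λ n i p1 else 0)
      = if Ev a j p1 then wE Λ n i p1 else 0
  by_cases hA : Ev a j p1
  · have e2 : (∑ r : Fin N, if Ev a j p1 ∧ p1.1 (Fin.last n) = r then wE Λ n i p1 else 0)
        = ∑ r : Fin N, if p1.1 (Fin.last n) = r then wE Λ n i p1 else 0 :=
      Finset.sum_congr rfl fun r _ => if_congr (by simp [hA]) rfl rfl
    rw [if_pos hA, e2,
      Finset.sum_ite_eq Finset.univ (p1.1 (Fin.last n)) fun _ => wE Λ n i p1,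
      if_pos (Finset.mem_univ _)]
  · rw [if_neg hA]
    exact Finset.sum_eq_zero fun r _ => if_neg (by rintro ⟨h, -⟩; exact hA h)

lemma sum_hitME_le_one (hΛ : ∀ m i j, 0 ≤ Λ m i j)
    (hP : ∀ i j, HasSum (fun m => Λ m i j) (P i j))
    (hPstoch : ∀ i, ∑ j, P i j = 1) (a L : ℕ) (i j : Fin N) :
    ∑ n ∈ Finset.range (L+1), hitME Λ n a i j ≤ 1 := by
  rw [Finset.sum_congr rfl fun n hn =>
    hitME_consis hΛ hP hPstoch a i j (L := L) (by simp at hn; omega)]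
  rw [← Summable.tsum_finsetSum fun n _ => ENNReal.summable]
  rw [← mass hΛ hP hPstoch L i]
  refine ENNReal.tsum_le_tsum fun p => ?_
  by_cases hex : ∃ n₀ ∈ Finset.range (L+1), EvC n₀ a j p
  · obtain ⟨n₀, hn₀, hE⟩ := hex
    rw [Finset.sum_eq_single_of_mem n₀ hn₀ ?_]
    · rw [if_pos hE]
    · intro b _ hb
      refine if_neg ?_
      rintro ⟨hb1, hb2, -⟩
      rcases Nat.lt_or_ge b n₀ with hlt | hge
      · have := hE.1 b hlt
        omega
      · have hgt : n₀ < b := by omega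
        have := hb1 n₀ hgt
        have := hE.2.1
        omega
  · push_neg at hex
    rw [Finset.sum_eq_zero fun n hn => if_neg (hex n hn)]
    exact zero_le

lemma hitME_le_one (hΛ : ∀ m i j, 0 ≤ Λ m i j)
    (hP : ∀ i j, HasSum (fun m => Λ m i j) (P i j))
    (hPstoch : ∀ i, ∑ j, P i j = 1) (n a : ℕ) (i j : Fin N) :
    hitME Λ n a i j ≤ 1 := by
  refine le_trans ?_ (sum_hitME_le_one hΛ hP hPstoch a n i j)
  exact Finset.single_le_sum (f := fun n => hitME Λ n a i j)
    (fun _ _ => zero_le) (Finset.self_mem_range_succ n)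

lemma GE_le_one (hΛ : ∀ m i j, 0 ≤ Λ m i j)
    (hP : ∀ i j, HasSum (fun m => Λ m i j) (P i j))
    (hPstoch : ∀ i, ∑ j, P i j = 1) {x : ENNReal} (hx : x ≤ 1) (a : ℕ) (i j : Fin N) :
    GE Λ x a i j ≤ 1 := by
  rw [GE, ENNReal.tsum_eq_iSup_sum]
  refine iSup_le fun s => ?_
  calc ∑ n ∈ s, x ^ n * hitME Λ n a i j
      ≤ ∑ n ∈ s, hitME Λ n a i j := by
        refine Finset.sum_le_sum fun n _ => ?_
        calc x ^ n * hitME Λ n a i j ≤ 1 * hitME Λ n a i j :=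
              mul_le_mul_left (pow_le_one' hx n) _
          _ = hitME Λ n a i j := one_mul _
    _ ≤ ∑ n ∈ Finset.range (s.sup id + 1), hitME Λ n a i j := by
        refine Finset.sum_le_sum_of_subset fun n hn => Finset.mem_range.2 ?_
        have : n ≤ s.sup id := Finset.le_sup (f := id) hn
        omega
    _ ≤ 1 := sum_hitME_le_one hΛ hP hPstoch a _ i j

/-! ### the convolution identity -/

lemma ite_partition {n : ℕ} (a : ℕ) (j : Fin N) (p : PathT N n) (w : ENNReal) :
    (if Ev (a+1) j p then w else 0)
    = ∑ m ∈ Finset.range (n+1), if Ev (a+1) j p ∧ tauEv a m p.2 then w else 0 := by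
  by_cases h : Ev (a+1) j p
  · have hex : ∃ k : ℕ, (a:ℤ) ≤ (k:ℤ) - S p.2 k := ⟨n, by have := h.2.1; push_cast at this ⊢; omega⟩
    have hspec : (a:ℤ) ≤ (Nat.find hex : ℤ) - S p.2 (Nat.find hex) := Nat.find_spec hex
    have hmin : ∀ k, k < Nat.find hex → (k:ℤ) - S p.2 k < a := by
      intro k hk
      have := Nat.find_min hex hk
      omega
    have hle : Nat.find hex ≤ n := Nat.find_le (by have := h.2.1; push_cast at this ⊢; omega)
    rw [if_pos h, Finset.sum_eq_single_of_mem (Nat.find hex) (Finset.mem_range.2 (by omega))]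
    · rw [if_pos ⟨h, hmin, hspec⟩]
    · intro b _ hb
      refine if_neg ?_
      rintro ⟨-, hb1, hb2⟩
      rcases Nat.lt_or_ge b (Nat.find hex) with hlt | hge
      · have := hmin b hlt
        omega
      · have hgt : Nat.find hex < b := by omega
        have := hb1 (Nat.find hex) hgt
        omega
  · rw [if_neg h, eq_comm]
    exact Finset.sum_eq_zero fun m _ => if_neg (by rintro ⟨hE, -⟩; exact h hE)

lemma hitME_conv {m l a : ℕ} {i j : Fin N} :
    (∑' p : PathT N (m+l), if Ev (a+1) j p ∧ tauEv a m p.2 then wE Λ (m+l) i p else 0)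
    = ∑ r : Fin N, hitME Λ m a i r * hitME Λ l 1 r j := by
  rw [tsum_congr fun p => if_congr (ev_equiv a j p) rfl rfl]
  rw [tsum_split i (fun p1 : PathT N m => tauEv a m p1.2) (Ev 1 j)]
  refine Finset.sum_congr rfl fun r _ => ?_
  congr 1
  refine tsum_congr fun p1 => if_congr ?_ rfl rfl
  unfold Ev tauEv
  constructor
  · rintro ⟨⟨x, y⟩, z⟩; exact ⟨x, y, z⟩
  · rintro ⟨x, y, z⟩; exact ⟨⟨x, y⟩, z⟩

lemma hitME_succ (n a : ℕ) (i j : Fin N) :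
    hitME Λ n (a+1) i j
    = ∑ m ∈ Finset.range (n+1), ∑ r : Fin N, hitME Λ m a i r * hitME Λ (n-m) 1 r j := by
  rw [hitME, tsum_congr fun p => ite_partition a j p (wE Λ n i p),
    Summable.tsum_finsetSum fun m _ => ENNReal.summable]
  refine Finset.sum_congr rfl fun m hm => ?_
  have hm' : m ≤ n := by simp at hm; omega
  obtain ⟨l, rfl⟩ : ∃ l, n = m + l := ⟨n - m, by omega⟩
  rw [show m + l - m = l from by omega]
  exact hitME_conv

/-! ### Cauchy product -/

lemma cauchy (f g : ℕ → ENNReal) :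
    ∑' n : ℕ, ∑ m ∈ Finset.range (n+1), f m * g (n-m) = (∑' n, f n) * (∑' n, g n) := by
  set H : ℕ × ℕ → ENNReal := fun q => if q.2 ≤ q.1 then f q.2 * g (q.1 - q.2) else 0 with hH
  have h1 : ∀ n, ∑ m ∈ Finset.range (n+1), f m * g (n-m) = ∑' m : ℕ, H (n, m) := by
    intro n
    have e : ∀ m : ℕ, H (n, m) = if m ≤ n then f m * g (n - m) else 0 := fun m => rfl
    rw [tsum_congr e, tsum_eq_sum (s := Finset.range (n+1))
      (fun m hm => if_neg (by simp at hm ⊢; omega))]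
    exact Finset.sum_congr rfl fun m hm => (if_pos (by simp at hm; omega)).symm
  rw [tsum_congr h1, ← ENNReal.tsum_prod']
  have h2 : ∑' q : ℕ × ℕ, H q = ∑' q : ℕ × ℕ, f q.1 * g q.2 := by
    rw [← Function.Injective.tsum_eq (g := fun q : ℕ × ℕ => (q.1 + q.2, q.1)) ?_ (f := H)  ?_]
    · refine tsum_congr fun q => ?_
      simp only [hH]
      rw [if_pos (by omega), show q.1 + q.2 - q.1 = q.2 from by omega]
    · intro x y h
      simp only [Prod.ext_iff] at h
      exact Prod.ext h.2 (by omega)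
    · rintro ⟨n, m⟩ hq
      simp only [Function.mem_support, hH] at hq
      have hmn : m ≤ n := by
        by_contra hc
        exact hq (if_neg hc)
      exact ⟨(m, n - m), Prod.ext (by simp; omega) (by simp)⟩
  have hsplit : ∑' q : ℕ × ℕ, f q.1 * g q.2 = ∑' (a : ℕ) (b : ℕ), f a * g b :=
    ENNReal.tsum_prod (f := fun a b => f a * g b)
  rw [h2, hsplit, tsum_congr fun a => ENNReal.tsum_mul_left]
  exact ENNReal.tsum_mul_right

lemma GE_succ (x : ENNReal) (a : ℕ) (i j : Fin N) :
    GE Λ x (a+1) i j = ∑ r : Fin N, GE Λ x a i r * GE Λ x 1 r j := by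
  have h1 : ∀ n, x ^ n * hitME Λ n (a+1) i j
      = ∑ r : Fin N, ∑ m ∈ Finset.range (n+1),
          (x ^ m * hitME Λ m a i r) * (x ^ (n-m) * hitME Λ (n-m) 1 r j) := by
    intro n
    rw [hitME_succ, Finset.mul_sum]
    have e : ∀ m ∈ Finset.range (n+1),
        x ^ n * ∑ r : Fin N, hitME Λ m a i r * hitME Λ (n-m) 1 r j
        = ∑ r : Fin N, (x ^ m * hitME Λ m a i r) * (x ^ (n-m) * hitME Λ (n-m) 1 r j) := by
      intro m hm
      rw [Finset.mul_sum]
      refine Finset.sum_congr rfl fun r _ => ?_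
      have hmn : m ≤ n := by simp at hm; omega
      have hx : x ^ n = x ^ m * x ^ (n-m) := by
        rw [← pow_add]
        congr 1
        omega
      rw [hx, mul_mul_mul_comm]
    rw [Finset.sum_congr rfl e]
    exact Finset.sum_comm
  rw [GE, tsum_congr h1, Summable.tsum_finsetSum fun r _ => ENNReal.summable]
  exact Finset.sum_congr rfl fun r _ =>
    cauchy (fun m => x ^ m * hitME Λ m a i r) (fun t => x ^ t * hitME Λ t 1 r j)


/-! ### level zero -/

lemma hitME_zero_zero (i j : Fin N) : hitME Λ 0 0 i j = if i = j then 1 else 0 := by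
  rw [hitME, tsum_eq_single ((fun _ => j, fun k => k.elim0) : PathT N 0)]
  · have hEv : Ev 0 j ((fun _ => j, fun k => k.elim0) : PathT N 0) := by
      refine ⟨fun k hk => absurd hk (by omega), ?_, rfl⟩
      simp [S_zero]
    rw [if_pos hEv]
    have hw : wE Λ 0 i ((fun _ => j, fun k => k.elim0) : PathT N 0)
        = if j = i then 1 else 0 := by simp [wE]
    rw [hw]
    exact if_congr ⟨Eq.symm, Eq.symm⟩ rfl rfl
  · intro p hp
    by_cases hEv : Ev 0 j p
    · exfalso
      apply hp
      refine Prod.ext (funext fun t => ?_) (funext fun k => k.elim0)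
      have ht : t = 0 := Fin.ext (by have := t.isLt; omega)
      rw [ht]
      exact (congrArg p.1 (Fin.ext (by simp [Fin.last]))).trans hEv.2.2
    · rw [if_neg hEv]

lemma hitME_succ_zero (n : ℕ) (i j : Fin N) : hitME Λ (n+1) 0 i j = 0 := by
  rw [hitME]
  have h : ∀ p : PathT N (n+1), (if Ev 0 j p then wE Λ (n+1) i p else 0) = 0 := by
    intro p
    rw [if_neg]
    rintro ⟨h1, -, -⟩
    have h0 := h1 0 (by omega)
    rw [S_zero] at h0
    simp at h0
  rw [tsum_congr h, tsum_zero]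

lemma GE_zero (x : ENNReal) (i j : Fin N) : GE Λ x 0 i j = if i = j then 1 else 0 := by
  rw [GE, tsum_eq_single 0 ?_]
  · rw [pow_zero, one_mul, hitME_zero_zero]
  · intro n hn
    obtain ⟨n', rfl⟩ : ∃ n', n = n' + 1 := ⟨n - 1, by omega⟩
    rw [hitME_succ_zero, mul_zero]

/-! ### transfer to the real-valued model -/

lemma wE_ne_top (n : ℕ) (i : Fin N) (p : PathT N n) : wE Λ n i p ≠ ⊤ := by
  rw [wE]
  refine ENNReal.mul_ne_top ?_ ?_
  · split_ifs <;> simp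
  · exact (ENNReal.prod_lt_top fun k _ => ENNReal.ofReal_lt_top).ne

lemma toReal_wE (hΛ : ∀ m i j, 0 ≤ Λ m i j) (n : ℕ) (i : Fin N) (p : PathT N n) :
    (wE Λ n i p).toReal = pathWeight Λ (delta i) n p.1 p.2 := by
  rw [wE, pathWeight, ENNReal.toReal_mul, ENNReal.toReal_prod]
  congr 1
  · rw [delta]
    split_ifs <;> simp
  · exact Finset.prod_congr rfl fun k _ => ENNReal.toReal_ofReal (hΛ _ _ _)

lemma hitM_eq (hΛ : ∀ m i j, 0 ≤ Λ m i j) (n a : ℕ) (i j : Fin N) :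
    hitM Λ n a i j = (hitME Λ n a i j).toReal := by
  have h1 : hitME Λ n a i j = ∑' p : {p : PathT N n // Ev a j p}, wE Λ n i (p : PathT N n) := by
    rw [hitME]
    refine Eq.trans ?_ (tsum_subtype {p : PathT N n | Ev a j p} (wE Λ n i)).symm
    refine tsum_congr fun p => ?_
    rw [Set.indicator_apply]
    exact if_congr (Iff.of_eq (Set.mem_setOf_eq).symm) rfl rfl
  calc hitM Λ n a i j
      = ∑' p : {p : PathT N n // Ev a j p}, pathWeight Λ (delta i) n p.1.1 p.1.2 := rfl
    _ = ∑' p : {p : PathT N n // Ev a j p}, (wE Λ n i (p : PathT N n)).toReal :=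
        tsum_congr fun p => (toReal_wE hΛ n i _).symm
    _ = (∑' p : {p : PathT N n // Ev a j p}, wE Λ n i (p : PathT N n)).toReal :=
        (ENNReal.tsum_toReal_eq fun p => wE_ne_top n i _).symm
    _ = (hitME Λ n a i j).toReal := by rw [h1]

lemma hitME_ne_top (hΛ : ∀ m i j, 0 ≤ Λ m i j)
    (hP : ∀ i j, HasSum (fun m => Λ m i j) (P i j))
    (hPstoch : ∀ i, ∑ j, P i j = 1) (n a : ℕ) (i j : Fin N) :
    hitME Λ n a i j ≠ ⊤ :=
  (lt_of_le_of_lt (hitME_le_one hΛ hP hPstoch n a i j) ENNReal.one_lt_top).ne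

lemma GE_ne_top (hΛ : ∀ m i j, 0 ≤ Λ m i j)
    (hP : ∀ i j, HasSum (fun m => Λ m i j) (P i j))
    (hPstoch : ∀ i, ∑ j, P i j = 1) {x : ENNReal} (hx : x ≤ 1) (a : ℕ) (i j : Fin N) :
    GE Λ x a i j ≠ ⊤ :=
  (lt_of_le_of_lt (GE_le_one hΛ hP hPstoch hx a i j) ENNReal.one_lt_top).ne

lemma Gser_eq (hΛ : ∀ m i j, 0 ≤ Λ m i j)
    (hP : ∀ i j, HasSum (fun m => Λ m i j) (P i j))
    (hPstoch : ∀ i, ∑ j, P i j = 1) (v : ℝ) (hv : 0 ≤ v) (a : ℕ) (i j : Fin N) :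
    Gser Λ v a i j = (GE Λ (ENNReal.ofReal v) a i j).toReal := by
  calc Gser Λ v a i j = ∑' n : ℕ, v ^ n * hitM Λ n a i j := rfl
    _ = ∑' n : ℕ, ((ENNReal.ofReal v) ^ n * hitME Λ n a i j).toReal := by
        refine tsum_congr fun n => ?_
        rw [ENNReal.toReal_mul, ENNReal.toReal_pow, ENNReal.toReal_ofReal hv,
          hitM_eq hΛ n a i j]
    _ = (∑' n : ℕ, (ENNReal.ofReal v) ^ n * hitME Λ n a i j).toReal :=
        (ENNReal.tsum_toReal_eq fun n =>
          ENNReal.mul_ne_top (ENNReal.pow_ne_top ENNReal.ofReal_ne_top)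
            (hitME_ne_top hΛ hP hPstoch n a i j)).symm
    _ = (GE Λ (ENNReal.ofReal v) a i j).toReal := rfl

/-- Skip-free power law for upper passage times.  For `v ∈ (0,1]` and
`a ∈ ℕ`, `G_v(a) = Σ_n v^n M(n,a)` satisfies `G_v(a) = (G_v(1))^a`. -/
theorem upper_passage_power
    {N : ℕ} (hN : 1 ≤ N)
    (Λ : ℕ → Matrix (Fin N) (Fin N) ℝ) (P : Matrix (Fin N) (Fin N) ℝ)
    (hΛ : ∀ m i j, 0 ≤ Λ m i j)
    (hP : ∀ i j, HasSum (fun m => Λ m i j) (P i j))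
    (hPstoch : ∀ i, ∑ j, P i j = 1)
    (v : ℝ) (hv0 : 0 < v) (hv1 : v ≤ 1) (a : ℕ) :
    Gser Λ v a = Gser Λ v 1 ^ a := by
  have hx1 : ENNReal.ofReal v ≤ 1 := by
    rw [← ENNReal.ofReal_one]
    exact ENNReal.ofReal_le_ofReal hv1
  induction a with
  | zero =>
    rw [pow_zero]
    ext i j
    rw [Gser_eq hΛ hP hPstoch v hv0.le 0 i j, GE_zero, Matrix.one_apply]
    split_ifs <;> simp
  | succ a ih =>
    rw [pow_succ, ← ih]
    ext i j
    rw [Matrix.mul_apply]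
    rw [Gser_eq hΛ hP hPstoch v hv0.le (a+1) i j, GE_succ (ENNReal.ofReal v) a i j,
      ENNReal.toReal_sum fun r _ =>
        ENNReal.mul_ne_top (GE_ne_top hΛ hP hPstoch hx1 a i r)
          (GE_ne_top hΛ hP hPstoch hx1 1 r j)]
    refine Finset.sum_congr rfl fun r _ => ?_
    rw [ENNReal.toReal_mul, Gser_eq hΛ hP hPstoch v hv0.le a i r,
      Gser_eq hΛ hP hPstoch v hv0.le 1 r j]


end CMB
end
end

section
/- (Distribution of the time to ruin, initial surplus one.) Assume λ_{ij}(0) > 0 for all i,j ∈ E, Λ(0) is invertible, and the environment chain is stationary with distribution π. With initial surplus x = 1, for every n ≥ 1 the matrix of ruin-time probabilities (with (i,j)-entry the probability of {τ_0^− = n, J_n = j} started from state i with X_0 = 1) satisfies P_{x=1}(τ_0^− = n, J_n) = Λ(0)^{−1} · ( Σ_{m=1}^{n} V(n, m)·P − Σ_{m=1}^{n+1} V(n+1, m) ). -/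
open scoped BigOperators

noncomputable section

namespace CMB

/-- Jump matrices `Λ̃(m)`, with `λ̃_{ij}(m) = (π_j/π_i)·λ_{ji}(m)`, of the time-reversed model. -/
def lamTilde {N : ℕ} (Λ : ℕ → Matrix (Fin N) (Fin N) ℝ) (π : Fin N → ℝ) :
    ℕ → Matrix (Fin N) (Fin N) ℝ := fun m i j => π j / π i * Λ m j i

/-- `V(n,a) := Δ_π⁻¹ · M̃(n,a)ᵀ · Δ_π`, where `M̃(n,a)` is the matrix of first-passage
probabilities of the time-reversed model. -/
def Vmat {N : ℕ} (Λ : ℕ → Matrix (Fin N) (Fin N) ℝ) (π : Fin N → ℝ) (n a : ℕ) :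
    Matrix (Fin N) (Fin N) ℝ := fun i j => π j / π i * hitM (lamTilde Λ π) n a j i

/-- `ruinM Λ x n i j` is the probability of `{τ_0^- = n, J_n = j}` started from state `i`
with initial surplus `x` (so `X_k = x + k - S_k`): `X_k > 0` for `1 ≤ k < n` and `X_n ≤ 0`. -/
def ruinM {N : ℕ} (Λ : ℕ → Matrix (Fin N) (Fin N) ℝ) (x : ℕ) (n : ℕ) :
    Matrix (Fin N) (Fin N) ℝ := fun i j => prob Λ (delta i) n fun J C =>
      (∀ k, 1 ≤ k → k < n → 0 < (x : ℤ) + k - S C k) ∧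
      (x : ℤ) + n - S C n ≤ 0 ∧ J (Fin.last n) = j

/-!
Summing the path weights over the environment path turns each probability matrix of the
statement into the claim mass of its event: the sum, over the claim sequences `C` in the event,
of the ordered products `Λ(C₁)⋯Λ(C_m)`. Time reversal with respect to `π` reverses these
products, so `V(n,a)` is the claim mass of the sequences whose reversal first passes level `a`
at time `n`. Multiplying by `Λ(0)` on the left prepends a zero claim and multiplying by `P` on
the right appends an arbitrary one, so both sides become claim masses over sequences `D` of
length `n + 1`, and the theorem reduces to an identity of indicator functions. With
`X_l = l - S_l`, the reversal of the first `n` claims first passes level `a` at time `n` iff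
`X_n - X_l < a ≤ X_n` for `1 ≤ l ≤ n`; since `X_1 ≤ 1`, exactly one level qualifies if
`X_1, …, X_n ≥ 1` and none otherwise. Splitting this event by the sign of `X_{n+1}` yields
ruin after a zero first claim and the event counted by the levels of `V(n+1, ·)`.
-/

section ClaimProducts

open scoped Matrix

variable {N : ℕ} (Λ : ℕ → Matrix (Fin N) (Fin N) ℝ)

def claimProd {m : ℕ} (C : Fin m → ℕ) : Matrix (Fin N) (Fin N) ℝ :=
  (List.ofFn fun k => Λ (C k)).prod

@[simp]
lemma claimProd_zero (C : Fin 0 → ℕ) : claimProd Λ C = 1 := rfl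

lemma claimProd_cons {m : ℕ} (a : ℕ) (C : Fin m → ℕ) :
    claimProd Λ (Fin.cons a C) = Λ a * claimProd Λ C := by
  simp [claimProd, List.ofFn_succ]

lemma claimProd_snoc {m : ℕ} (C : Fin m → ℕ) (a : ℕ) :
    claimProd Λ (Fin.snoc C a) = claimProd Λ C * Λ a := by
  rw [claimProd, List.ofFn_succ', List.prod_concat]
  simp [claimProd]

lemma sum_pathWeight_eq_vecMul_claimProd (μ : Fin N → ℝ) {m : ℕ} (C : Fin m → ℕ) (j : Fin N) :
    ∑ J : Fin (m + 1) → Fin N, (if J (Fin.last m) = j then pathWeight Λ μ m J C else 0) =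
      (μ ᵥ* claimProd Λ C) j := by
  induction m generalizing j with
  | zero =>
    rw [← (Equiv.funUnique (Fin 1) (Fin N)).symm.sum_comp]
    simp [pathWeight, Matrix.vecMul, dotProduct, Matrix.one_apply]
  | succ m ih =>
    induction C using Fin.snocCases with
    | snoc C a =>
    rw [← (Fin.snocEquiv fun _ => Fin N).sum_comp, Fintype.sum_prod_type]
    simp only [Fin.snocEquiv_apply, Fin.snoc_last]
    rw [Finset.sum_comm]
    simp only [Finset.sum_ite_eq', Finset.mem_univ, if_true]
    rw [claimProd_snoc, ← Matrix.vecMul_vecMul, Matrix.vecMul, dotProduct]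
    simp only [← ih, Finset.sum_mul, ite_zero_mul]
    rw [Finset.sum_comm]
    simp only [Finset.sum_ite_eq, Finset.mem_univ, if_true]
    refine Finset.sum_congr rfl fun J _ => ?_
    simp [pathWeight, Fin.prod_univ_castSucc, Fin.succ_castSucc, -Fin.castSucc_succ, mul_assoc]

variable {Λ}

lemma claimProd_nonneg (hΛ : ∀ m i j, 0 ≤ Λ m i j) {m : ℕ} (C : Fin m → ℕ) (i j : Fin N) :
    0 ≤ claimProd Λ C i j := by
  induction m generalizing i with
  | zero => simp [Matrix.one_apply, apply_ite]
  | succ m ih =>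
    induction C using Fin.consCases with
    | cons a C =>
    rw [claimProd_cons, Matrix.mul_apply]
    exact Finset.sum_nonneg fun k _ => mul_nonneg (hΛ _ _ _) (ih _ _)

lemma summable_claimProd (hΛ : ∀ m i j, 0 ≤ Λ m i j)
    (hS : ∀ i j, Summable fun m => Λ m i j) {m : ℕ} (i j : Fin N) :
    Summable fun C : Fin m → ℕ => claimProd Λ C i j := by
  induction m generalizing i with
  | zero => exact Summable.of_finite
  | succ m ih =>
    have hterm (k : Fin N) :=
      (hS i k).mul_of_nonneg (ih k) (fun a => hΛ a i k) (fun C => claimProd_nonneg hΛ C k j)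
    rw [← (Fin.consEquiv fun _ => ℕ).summable_iff]
    refine (summable_sum (s := .univ) fun k _ => hterm k).congr fun q => ?_
    show _ = claimProd Λ (Fin.cons q.1 q.2) i j
    rw [claimProd_cons, Matrix.mul_apply]

end ClaimProducts

section ClaimMass

variable {N : ℕ} (Λ : ℕ → Matrix (Fin N) (Fin N) ℝ)

def claimMass (m : ℕ) (A : Set (Fin m → ℕ)) : Matrix (Fin N) (Fin N) ℝ :=
  fun i j => ∑' C, A.indicator (fun C => claimProd Λ C i j) C

variable {Λ}

lemma delta_eq_single (i : Fin N) : delta i = Pi.single i 1 :=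
  funext fun _ => (Pi.single_apply _ _ _).symm

lemma prob_eq_claimMass (hΛ : ∀ m i j, 0 ≤ Λ m i j) (hS : ∀ i j, Summable fun m => Λ m i j)
    {m : ℕ} (A : Set (Fin m → ℕ)) (i j : Fin N) :
    prob Λ (delta i) m (fun J C => C ∈ A ∧ J (Fin.last m) = j) = claimMass Λ m A i j := by
  classical
  set f : (Fin m → ℕ) × (Fin (m + 1) → Fin N) → ℝ := fun q =>
    if q.1 ∈ A ∧ q.2 (Fin.last m) = j then pathWeight Λ (delta i) m q.2 q.1 else 0
  have hfiber (C : Fin m → ℕ) : ∑' J, f (C, J) = A.indicator (fun C => claimProd Λ C i j) C := by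
    rw [tsum_fintype]
    by_cases hC : C ∈ A
    · simp [f, hC, sum_pathWeight_eq_vecMul_claimProd, delta_eq_single]
    · simp [f, hC]
  have hf_nonneg : 0 ≤ f := fun q => by
    simp only [f]
    split_ifs
    · exact mul_nonneg (by simp [delta, apply_ite]) (Finset.prod_nonneg fun _ _ => hΛ _ _ _)
    · exact le_rfl
  have hf : Summable f := (summable_prod_of_nonneg hf_nonneg).2
    ⟨fun _ => Summable.of_finite,
      by simpa only [hfiber] using (summable_claimProd hΛ hS i j).indicator A⟩
  calc prob Λ (delta i) m (fun J C => C ∈ A ∧ J (Fin.last m) = j)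
      = ∑' q, f (Equiv.prodComm _ _ q) := by
        refine (tsum_subtype {p : (Fin (m + 1) → Fin N) × (Fin m → ℕ) |
          p.2 ∈ A ∧ p.1 (Fin.last m) = j} fun p => pathWeight Λ (delta i) m p.1 p.2).trans
          (tsum_congr fun q => ?_)
        simp [f, Set.indicator_apply, and_comm]
    _ = ∑' C, ∑' J, f (C, J) := by rw [Equiv.tsum_eq, hf.tsum_prod' fun C => Summable.of_finite]
    _ = claimMass Λ m A i j := tsum_congr hfiber

lemma hasSum_claimMass (hΛ : ∀ m i j, 0 ≤ Λ m i j) (hS : ∀ i j, Summable fun m => Λ m i j)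
    {m : ℕ} (A : Set (Fin m → ℕ)) (i j : Fin N) :
    HasSum (A.indicator fun C => claimProd Λ C i j) (claimMass Λ m A i j) :=
  ((summable_claimProd hΛ hS i j).indicator A).hasSum

lemma mul_claimMass (hΛ : ∀ m i j, 0 ≤ Λ m i j) (hS : ∀ i j, Summable fun m => Λ m i j)
    (c : ℕ) {m : ℕ} (A : Set (Fin m → ℕ)) :
    Λ c * claimMass Λ m A = claimMass Λ (m + 1) {D | D 0 = c ∧ Fin.tail D ∈ A} := by
  ext i j
  have hsupp : Function.support ({D : Fin (m + 1) → ℕ | D 0 = c ∧ Fin.tail D ∈ A}.indicator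
      fun D => claimProd Λ D i j) ⊆ Set.range (Fin.cons (α := fun _ => ℕ) c) := fun D hD => by
    obtain ⟨hD0, -⟩ := Set.mem_of_indicator_ne_zero hD
    exact ⟨Fin.tail D, hD0 ▸ Fin.cons_self_tail D⟩
  have hsum : HasSum (fun C => ∑ k, Λ c i k * A.indicator (fun C => claimProd Λ C k j) C)
      ((Λ c * claimMass Λ m A) i j) :=
    hasSum_sum fun k _ => (hasSum_claimMass hΛ hS A k j).mul_left _
  refine hsum.tsum_eq.symm.trans (.trans (tsum_congr fun C => ?_)
    ((Fin.cons_right_injective (α := fun _ => ℕ) c).tsum_eq hsupp))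
  by_cases hC : C ∈ A
  · simp [hC, claimProd_cons, Matrix.mul_apply]
  · simp [hC]

lemma claimMass_mul (hΛ : ∀ m i j, 0 ≤ Λ m i j) {P : Matrix (Fin N) (Fin N) ℝ}
    (hP : ∀ i j, HasSum (fun m => Λ m i j) (P i j)) {m : ℕ} (A : Set (Fin m → ℕ)) :
    claimMass Λ m A * P = claimMass Λ (m + 1) {D | Fin.init D ∈ A} := by
  have hS i j := (hP i j).summable
  ext i j
  have hterm (k : Fin N) := (hP k j).mul (hasSum_claimMass hΛ hS A i k)
    ((hS k j).mul_of_nonneg ((summable_claimProd hΛ hS i k).indicator A) (fun a => hΛ a k j)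
      fun C => Set.indicator_apply_nonneg fun _ => claimProd_nonneg hΛ C i k)
  have hsum := hasSum_sum (s := .univ) fun k _ => hterm k
  rw [← (Fin.snocEquiv fun _ => ℕ).symm.hasSum_iff] at hsum
  refine ((Finset.sum_congr rfl fun k _ => mul_comm _ _).trans hsum.tsum_eq.symm).trans
    (tsum_congr fun D => ?_)
  induction D using Fin.snocCases with
  | snoc C a =>
  by_cases hC : C ∈ A
  · simp [hC, claimProd_snoc, Matrix.mul_apply, mul_comm]
  · simp [hC]

lemma sum_claimMass_eq_add (hΛ : ∀ m i j, 0 ≤ Λ m i j) (hS : ∀ i j, Summable fun m => Λ m i j)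
    {m : ℕ} {ι κ : Type*} (s : Finset ι) (t : Finset κ) (A : ι → Set (Fin m → ℕ))
    (R : Set (Fin m → ℕ)) (B : κ → Set (Fin m → ℕ))
    (h : ∀ C, ∑ a ∈ s, (A a).indicator (1 : (Fin m → ℕ) → ℝ) C =
      R.indicator 1 C + ∑ b ∈ t, (B b).indicator 1 C) :
    ∑ a ∈ s, claimMass Λ m (A a) = claimMass Λ m R + ∑ b ∈ t, claimMass Λ m (B b) := by
  ext i j
  have hind (S : Set (Fin m → ℕ)) (C : Fin m → ℕ) :
      S.indicator (fun C => claimProd Λ C i j) C = S.indicator 1 C * claimProd Λ C i j := by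
    by_cases hC : C ∈ S <;> simp [hC]
  have hl := hasSum_sum fun a (_ : a ∈ s) => hasSum_claimMass hΛ hS (A a) i j
  have hr := (hasSum_claimMass hΛ hS R i j).add
    (hasSum_sum fun b (_ : b ∈ t) => hasSum_claimMass hΛ hS (B b) i j)
  simp only [Matrix.add_apply, Matrix.sum_apply]
  refine hl.unique (hr.congr_fun fun C => ?_)
  simp only [hind, ← Finset.sum_mul, ← add_mul, h]

end ClaimMass

section Surplus

def surplus {m : ℕ} (C : Fin m → ℕ) (k : ℕ) : ℤ := k - S C k

lemma surplus_le {m : ℕ} (C : Fin m → ℕ) (k : ℕ) : surplus C k ≤ k := by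
  simp [surplus]

lemma surplus_zero {m : ℕ} (C : Fin m → ℕ) : surplus C 0 = 0 := by
  simp [surplus, S]

lemma surplus_succ {n : ℕ} (D : Fin (n + 1) → ℕ) (k : ℕ) :
    surplus D (k + 1) = 1 - D 0 + surplus (Fin.tail D) k := by
  simp only [surplus, S, Fin.sum_univ_succ, Fin.val_zero, Fin.val_succ, Fin.tail,
    Nat.add_lt_add_iff_right, Nat.zero_lt_succ, if_true]
  push_cast
  ring

lemma surplus_init {n : ℕ} (D : Fin (n + 1) → ℕ) {l : ℕ} (hl : l ≤ n) :
    surplus (Fin.init D) l = surplus D l := by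
  simp [surplus, S, Fin.sum_univ_castSucc, Fin.init, hl.not_gt]

lemma surplus_comp_rev {M : ℕ} (C : Fin M → ℕ) {k : ℕ} (hk : k ≤ M) :
    surplus (C ∘ Fin.rev) k = surplus C M - surplus C (M - k) := by
  have hS : S (C ∘ Fin.rev) k + S C (M - k) = S C M := by
    rw [S, S, S, ← Equiv.sum_comp Fin.revPerm, ← Finset.sum_add_distrib]
    refine Finset.sum_congr rfl fun j _ => ?_
    have := j.isLt
    simp only [Fin.revPerm_apply, Function.comp_apply, Fin.rev_rev, Fin.val_rev]
    split_ifs <;> omega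
  simp only [surplus]
  omega

end Surplus

section Events

variable {N : ℕ} {Λ : ℕ → Matrix (Fin N) (Fin N) ℝ}

def ruinSet (x n : ℕ) : Set (Fin n → ℕ) :=
  {C | (∀ k, 1 ≤ k → k < n → 0 < x + surplus C k) ∧ x + surplus C n ≤ 0}

def firstPassageSet (n a : ℕ) : Set (Fin n → ℕ) :=
  {C | (∀ k, k < n → surplus C k < a) ∧ a ≤ surplus C n}

def staysPositive {m : ℕ} (n : ℕ) : Set (Fin m → ℕ) :=
  {C | ∀ l, 1 ≤ l → l ≤ n → 1 ≤ surplus C l}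

lemma ruinM_eq_claimMass (hΛ : ∀ m i j, 0 ≤ Λ m i j) (hS : ∀ i j, Summable fun m => Λ m i j)
    (x n : ℕ) : ruinM Λ x n = claimMass Λ n (ruinSet x n) := by
  ext i j
  rw [← prob_eq_claimMass hΛ hS]
  simp only [ruinM, ruinSet, surplus, Set.mem_ofPred_eq, add_sub_assoc, and_assoc]

lemma hitM_eq_claimMass (hΛ : ∀ m i j, 0 ≤ Λ m i j) (hS : ∀ i j, Summable fun m => Λ m i j)
    (n a : ℕ) : hitM Λ n a = claimMass Λ n (firstPassageSet n a) := by
  ext i j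
  rw [← prob_eq_claimMass hΛ hS]
  simp only [hitM, firstPassageSet, surplus, Set.mem_ofPred_eq, and_assoc]

lemma claimProd_lamTilde {π : Fin N → ℝ} (hπ : ∀ i, π i ≠ 0) {m : ℕ} (C : Fin m → ℕ)
    (i j : Fin N) :
    claimProd (lamTilde Λ π) C i j = π j / π i * claimProd Λ (C ∘ Fin.rev) j i := by
  induction m generalizing i with
  | zero =>
    by_cases hij : i = j
    · simp [hij, hπ j]
    · simp [hij, Ne.symm hij]
  | succ m ih =>
    induction C using Fin.consCases with
    | cons a C =>
    rw [claimProd_cons, Matrix.mul_apply, Fin.cons_comp_rev, claimProd_snoc, Matrix.mul_apply,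
      Finset.mul_sum]
    refine Finset.sum_congr rfl fun k _ => ?_
    rw [ih, lamTilde]
    field_simp [hπ i, hπ k]

lemma claimMass_lamTilde {π : Fin N → ℝ} (hπ : ∀ i, π i ≠ 0) {m : ℕ} (A : Set (Fin m → ℕ))
    (i j : Fin N) :
    claimMass (lamTilde Λ π) m A i j = π j / π i * claimMass Λ m {C | C ∘ Fin.rev ∈ A} j i := by
  let e : (Fin m → ℕ) ≃ (Fin m → ℕ) :=
    Function.Involutive.toPerm (· ∘ Fin.rev) fun C => funext fun k => by simp
  rw [claimMass, claimMass, ← tsum_mul_left, ← e.tsum_eq]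
  refine tsum_congr fun C => ?_
  change A.indicator _ (C ∘ Fin.rev) = _
  by_cases hC : C ∘ Fin.rev ∈ A
  · simp [hC, claimProd_lamTilde hπ, Function.comp_assoc, Fin.rev_involutive.comp_self]
  · simp [hC]

lemma Vmat_eq_claimMass (hΛ : ∀ m i j, 0 ≤ Λ m i j) (hS : ∀ i j, Summable fun m => Λ m i j)
    {π : Fin N → ℝ} (hπ : ∀ i, 0 < π i) (n a : ℕ) :
    Vmat Λ π n a = claimMass Λ n {C | C ∘ Fin.rev ∈ firstPassageSet n a} := by
  have hΛ' m i j : 0 ≤ lamTilde Λ π m i j :=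
    mul_nonneg (div_nonneg (hπ j).le (hπ i).le) (hΛ m j i)
  have hS' i j : Summable fun m => lamTilde Λ π m i j := (hS j i).mul_left _
  ext i j
  rw [Vmat, hitM_eq_claimMass hΛ' hS', claimMass_lamTilde fun i => (hπ i).ne']
  field_simp [(hπ i).ne', (hπ j).ne']

end Events

section Ladder

lemma comp_rev_mem_firstPassageSet_iff {M : ℕ} (C : Fin M → ℕ) (a : ℕ) :
    C ∘ Fin.rev ∈ firstPassageSet M a ↔
      a ≤ surplus C M ∧ ∀ l, 1 ≤ l → l ≤ M → surplus C M - surplus C l < a := by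
  have hrev k (hk : k ≤ M) := surplus_comp_rev C hk
  have hM := hrev M le_rfl
  rw [Nat.sub_self, surplus_zero] at hM
  constructor
  · rintro ⟨hlt, hle⟩
    refine ⟨by omega, fun l hl hlM => ?_⟩
    have := hlt (M - l) (by omega)
    rw [hrev _ (by omega), Nat.sub_sub_self hlM] at this
    exact this
  · rintro ⟨hle, hlt⟩
    refine ⟨fun k hk => ?_, by omega⟩
    rw [hrev k hk.le]
    exact hlt (M - k) (by omega) (by omega)

lemma head_eq_zero_and_tail_mem_ruinSet_one_iff {n : ℕ} (hn : 1 ≤ n) (D : Fin (n + 1) → ℕ) :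
    D 0 = 0 ∧ Fin.tail D ∈ ruinSet 1 n ↔ D ∈ staysPositive n ∧ surplus D (n + 1) ≤ 0 := by
  have hsucc k := surplus_succ D k
  have h1 : surplus D 1 = 1 - D 0 := by simpa [surplus_zero] using hsucc 0
  constructor
  · rintro ⟨hD0, hpos, hlast⟩
    refine ⟨fun l hl hln => ?_, by have := hsucc n; push_cast at *; omega⟩
    obtain ⟨k, rfl⟩ := Nat.exists_eq_add_of_le' hl
    rcases Nat.eq_zero_or_pos k with rfl | hk
    · rw [zero_add]; omega
    · have := hpos k hk (by omega); have := hsucc k; push_cast at *; omega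
  · rintro ⟨hpos, hlast⟩
    have hD0 : D 0 = 0 := by have := hpos 1 le_rfl hn; omega
    refine ⟨hD0, fun k hk hkn => ?_, ?_⟩
    · have := hpos (k + 1) (by omega) (by omega); have := hsucc k; push_cast at *; omega
    · have := hsucc n; push_cast at *; omega

lemma sum_indicator_comp_rev_firstPassageSet {M : ℕ} (hM : 1 ≤ M) (C : Fin M → ℕ) :
    ∑ a ∈ Finset.Icc 1 M, {C : Fin M → ℕ | C ∘ Fin.rev ∈ firstPassageSet M a}.indicator 1 C =
      (staysPositive M).indicator (1 : (Fin M → ℕ) → ℝ) C := by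
  by_cases hpos : C ∈ staysPositive M
  · have hXM := hpos M hM le_rfl
    have hmem : (surplus C M).toNat ∈ Finset.Icc 1 M := by
      have := surplus_le C M
      simp only [Finset.mem_Icc]
      omega
    -- `X_M - X_1 < a ≤ X_M` and `X_1 ≤ 1` leave `a = X_M` as the only possible level
    rw [Set.indicator_of_mem hpos, Finset.sum_eq_single_of_mem _ hmem fun b _ hb => ?_]
    · refine Set.indicator_of_mem
        ((comp_rev_mem_firstPassageSet_iff C _).2 ⟨?_, fun l hl hlM => ?_⟩) (1 : (Fin M → ℕ) → ℝ)
      · omega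
      · have := hpos l hl hlM
        omega
    · refine Set.indicator_of_notMem (fun h => hb ?_) (1 : (Fin M → ℕ) → ℝ)
      obtain ⟨hbX, hlt⟩ := (comp_rev_mem_firstPassageSet_iff C b).1 h
      have := hlt 1 le_rfl hM
      have := surplus_le C 1
      have := hpos 1 le_rfl hM
      omega
  · rw [Set.indicator_of_notMem hpos]
    refine Finset.sum_eq_zero fun a _ =>
      Set.indicator_of_notMem (fun h => hpos ?_) (1 : (Fin M → ℕ) → ℝ)
    obtain ⟨haX, hlt⟩ := (comp_rev_mem_firstPassageSet_iff C a).1 h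
    intro l hl hlM
    have := hlt l hl hlM
    omega

lemma indicator_ruinSet_add_indicator_staysPositive {n : ℕ} (hn : 1 ≤ n)
    (D : Fin (n + 1) → ℕ) :
    {D : Fin (n + 1) → ℕ | D 0 = 0 ∧ Fin.tail D ∈ ruinSet 1 n}.indicator 1 D +
        (staysPositive (n + 1)).indicator 1 D =
      (staysPositive n).indicator (1 : (Fin (n + 1) → ℕ) → ℝ) D := by
  have hruin : D ∈ {D : Fin (n + 1) → ℕ | D 0 = 0 ∧ Fin.tail D ∈ ruinSet 1 n} ↔ _ :=
    head_eq_zero_and_tail_mem_ruinSet_one_iff hn D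
  by_cases hpos : D ∈ staysPositive n
  · rw [Set.indicator_of_mem hpos]
    by_cases hlast : surplus D (n + 1) ≤ 0
    · have hstop : D ∉ staysPositive (n + 1) := fun h => by
        have := h (n + 1) (by omega) le_rfl
        omega
      rw [Set.indicator_of_mem (hruin.2 ⟨hpos, hlast⟩), Set.indicator_of_notMem hstop]
      simp
    · have hgo : D ∈ staysPositive (n + 1) := fun l hl hln => by
        rcases Nat.lt_or_ge l (n + 1) with h | h
        · exact hpos l hl (by omega)
        · rw [show l = n + 1 by omega]
          omega
      rw [Set.indicator_of_notMem fun h => hlast (hruin.1 h).2, Set.indicator_of_mem hgo]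
      simp
  · rw [Set.indicator_of_notMem hpos, Set.indicator_of_notMem fun h => hpos (hruin.1 h).1,
      Set.indicator_of_notMem fun (h : D ∈ staysPositive (n + 1)) => hpos fun l hl hln =>
        h l hl (by omega)]
    simp

lemma sum_indicator_init_eq_indicator_ruinSet_add {n : ℕ} (hn : 1 ≤ n) (D : Fin (n + 1) → ℕ) :
    ∑ a ∈ Finset.Icc 1 n, {D : Fin (n + 1) → ℕ |
        Fin.init D ∈ {C | C ∘ Fin.rev ∈ firstPassageSet n a}}.indicator 1 D =
      {D : Fin (n + 1) → ℕ | D 0 = 0 ∧ Fin.tail D ∈ ruinSet 1 n}.indicator 1 D +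
        ∑ a ∈ Finset.Icc 1 (n + 1),
          {D : Fin (n + 1) → ℕ | D ∘ Fin.rev ∈ firstPassageSet (n + 1) a}.indicator
            (1 : (Fin (n + 1) → ℕ) → ℝ) D := by
  have hinit : (staysPositive n).indicator (1 : (Fin n → ℕ) → ℝ) (Fin.init D) =
      (staysPositive n).indicator 1 D :=
    Set.indicator_eq_indicator (forall₃_congr fun l _ hl => by rw [surplus_init D hl]) rfl
  rw [sum_indicator_comp_rev_firstPassageSet (by omega) D,
    indicator_ruinSet_add_indicator_staysPositive hn D,
    ← hinit, ← sum_indicator_comp_rev_firstPassageSet hn (Fin.init D)]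
  exact Finset.sum_congr rfl fun a _ => Set.indicator_comp_right (g := 1) Fin.init

end Ladder

theorem ruin_time_distribution_one_general
    {N : ℕ}
    (Λ : ℕ → Matrix (Fin N) (Fin N) ℝ) (P : Matrix (Fin N) (Fin N) ℝ)
    (hΛ : ∀ m i j, 0 ≤ Λ m i j)
    (hP : ∀ i j, HasSum (fun m => Λ m i j) (P i j))
    (π : Fin N → ℝ) (hπpos : ∀ i, 0 < π i)
    (hinv : IsUnit (Λ 0))
    (n : ℕ) (hn : 1 ≤ n) :
    ruinM Λ 1 n = (Λ 0)⁻¹ *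
      ((∑ m ∈ Finset.Icc 1 n, Vmat Λ π n m * P) -
        ∑ m ∈ Finset.Icc 1 (n + 1), Vmat Λ π (n + 1) m) := by
  have hS i j := (hP i j).summable
  have hfirst : Λ 0 * ruinM Λ 1 n = (∑ m ∈ Finset.Icc 1 n, Vmat Λ π n m * P) -
      ∑ m ∈ Finset.Icc 1 (n + 1), Vmat Λ π (n + 1) m := by
    simp only [ruinM_eq_claimMass hΛ hS, mul_claimMass hΛ hS, Vmat_eq_claimMass hΛ hS hπpos,
      claimMass_mul hΛ hP]
    exact eq_sub_of_add_eq (sum_claimMass_eq_add hΛ hS _ _ _ _ _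
      (sum_indicator_init_eq_indicator_ruinSet_add hn)).symm
  rw [← hfirst, Matrix.nonsing_inv_mul_cancel_left _ _ ((Matrix.isUnit_iff_isUnit_det _).1 hinv)]

/-- Distribution of the time to ruin, initial surplus one.  Assume
`λ_{ij}(0) > 0`, `Λ(0)` invertible, and the environment chain stationary with distribution
`π`.  With `x = 1`, for every `n ≥ 1`,
`P_{x=1}(τ_0^- = n, J_n) = Λ(0)⁻¹·(Σ_{m=1}^{n} V(n,m)·P − Σ_{m=1}^{n+1} V(n+1,m))`. -/
theorem ruin_time_distribution_one
    {N : ℕ} (hN : 1 ≤ N)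
    (Λ : ℕ → Matrix (Fin N) (Fin N) ℝ) (P : Matrix (Fin N) (Fin N) ℝ)
    (hΛ : ∀ m i j, 0 ≤ Λ m i j)
    (hP : ∀ i j, HasSum (fun m => Λ m i j) (P i j))
    (hPstoch : ∀ i, ∑ j, P i j = 1)
    (π : Fin N → ℝ) (hπpos : ∀ i, 0 < π i) (hπsum : ∑ i, π i = 1)
    (hπP : ∀ j, ∑ i, π i * P i j = π j)
    (hzero : ∀ i j, 0 < Λ 0 i j) (hinv : IsUnit (Λ 0))
    (n : ℕ) (hn : 1 ≤ n) :
    ruinM Λ 1 n = (Λ 0)⁻¹ *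
      ((∑ m ∈ Finset.Icc 1 n, Vmat Λ π n m * P) -
        ∑ m ∈ Finset.Icc 1 (n + 1), Vmat Λ π (n + 1) m) :=
  ruin_time_distribution_one_general Λ P hΛ hP π hπpos hinv n hn

end CMB
end
end

section
/- (Duality between survival paths and reversed first passage.) Assume the environment chain is stationary with distribution π. Then for every initial surplus x ∈ ℕ, every n ≥ 1 and every integer m with 1 ≤ m ≤ x+n: P_π( X_k > 0 for all 0 < k < n, and X_n = m | X_0 = x ) = P_π( τ̃_m^+ ≥ n and X̃_n = m − x ), where the left side is computed in the compound Markov binomial model with initial surplus x and the right side in the time-reversed model (both with initial distribution π). -/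
open scoped BigOperators

noncomputable section

namespace CMB

/-!
Reversing time maps a path `(J, C)` of the model to the path `(J ∘ rev, C ∘ rev)`. The weight
of a path under the reversed jump matrices started from `π` is the weight of its reversal under
the original ones started from `π`, because the ratios `π_{J(k+1)} / π_{J k}` telescope to
`π_{J n} / π_{J 0}`. On claim sequences, reversal turns the surplus `X_k` into `m - X̃_{n-k}`
as soon as `X_n = m`, so the survival event corresponds exactly to the event that the reversed
surplus stays below `m` before time `n` and ends at `m - x`.
-/

lemma mul_prod_succ_div_castSucc {G₀ : Type*} [CommGroupWithZero G₀] {n : ℕ}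
    (f : Fin (n + 1) → G₀) (hf : ∀ i, f i ≠ 0) :
    f 0 * ∏ k : Fin n, f k.succ / f k.castSucc = f (Fin.last n) := by
  have hcast : ∏ k : Fin n, f k.castSucc ≠ 0 := Finset.prod_ne_zero_iff.mpr fun k _ => hf _
  rw [Finset.prod_div_distrib, mul_div_assoc', ← Fin.prod_univ_succ, Fin.prod_univ_castSucc,
    mul_div_cancel_left₀ _ hcast]

lemma S_comp_rev_add {n : ℕ} (C : Fin n → ℕ) {k : ℕ} (hk : k ≤ n) :
    S (C ∘ Fin.rev) k + S C (n - k) = S C n := by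
  have hrev : S (C ∘ Fin.rev) k = ∑ j : Fin n, if n - 1 - (j : ℕ) < k then C j else 0 :=
    Fintype.sum_equiv Fin.revPerm _ _ fun j => by
      simp only [Function.comp_apply, Fin.revPerm_apply, Fin.val_rev]
      split_ifs <;> omega
  rw [hrev, S, S, ← Finset.sum_add_distrib]
  refine Finset.sum_congr rfl fun j _ => ?_
  have hj := j.isLt
  split_ifs <;> omega

lemma reversed_passage_iff_survival_comp_rev {n : ℕ} (C : Fin n → ℕ) {x m : ℕ} (hm : 1 ≤ m) :
    ((∀ k, k < n → (k : ℤ) - S C k < (m : ℤ)) ∧ (n : ℤ) - S C n = (m : ℤ) - x) ↔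
      ((∀ k, 0 < k → k < n → 0 < (x : ℤ) + k - S (C ∘ Fin.rev) k) ∧
        (x : ℤ) + n - S (C ∘ Fin.rev) n = m) := by
  have hS0 : S C 0 = 0 := by simp [S]
  have htotal : S (C ∘ Fin.rev) n = S C n := by simpa [hS0] using S_comp_rev_add C le_rfl
  constructor
  · rintro ⟨hbelow, hend⟩
    refine ⟨fun k hk hkn => ?_, by omega⟩
    have := S_comp_rev_add C hkn.le
    have := hbelow (n - k) (by omega)
    omega
  · rintro ⟨hpos, hend⟩
    refine ⟨fun k hkn => ?_, by omega⟩
    rcases Nat.eq_zero_or_pos k with rfl | hk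
    · omega
    · have := S_comp_rev_add C (k := n - k) (by omega)
      have := hpos (n - k) (by omega) (by omega)
      rw [Nat.sub_sub_self hkn.le] at *
      omega

def reversePath {N n : ℕ} : Equiv.Perm ((Fin (n + 1) → Fin N) × (Fin n → ℕ)) :=
  Function.Involutive.toPerm (fun p => (p.1 ∘ Fin.rev, p.2 ∘ Fin.rev)) fun p => by
    ext <;> simp

lemma pathWeight_lamTilde {N n : ℕ} (Λ : ℕ → Matrix (Fin N) (Fin N) ℝ) {π : Fin N → ℝ}
    (hπ : ∀ i, π i ≠ 0) (J : Fin (n + 1) → Fin N) (C : Fin n → ℕ) :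
    pathWeight (lamTilde Λ π) π n J C = pathWeight Λ π n (J ∘ Fin.rev) (C ∘ Fin.rev) := by
  have hΛrev : ∏ k : Fin n, Λ (C k) (J k.succ) (J k.castSucc) =
      ∏ k : Fin n, Λ (C k.rev) (J k.castSucc.rev) (J k.succ.rev) :=
    Fintype.prod_equiv Fin.revPerm _ _ fun k => by simp [Fin.rev_castSucc, Fin.rev_succ]
  have hπ_telescope := mul_prod_succ_div_castSucc (fun i => π (J i)) fun i => hπ _
  simp only [pathWeight, lamTilde, Finset.prod_mul_distrib, ← mul_assoc, hπ_telescope, hΛrev,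
    Function.comp_apply, Fin.rev_zero]

lemma prob_eq_of_perm {N n : ℕ} {Λ Λ' : ℕ → Matrix (Fin N) (Fin N) ℝ} {μ μ' : Fin N → ℝ}
    {A B : (Fin (n + 1) → Fin N) → (Fin n → ℕ) → Prop}
    (e : Equiv.Perm ((Fin (n + 1) → Fin N) × (Fin n → ℕ)))
    (hAB : ∀ p, A p.1 p.2 ↔ B (e p).1 (e p).2)
    (hw : ∀ p, pathWeight Λ μ n p.1 p.2 = pathWeight Λ' μ' n (e p).1 (e p).2) :
    prob Λ μ n A = prob Λ' μ' n B := by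
  unfold prob
  rw [← Equiv.tsum_eq (e.subtypeEquiv hAB) fun q => pathWeight Λ' μ' n q.1.1 q.1.2]
  exact tsum_congr fun p => hw p

/-- `{τ̃_m^+ ≥ n}` is encoded as `{X̃_k < m ∀ k < n}`. -/
theorem survival_reversal_duality_general
    {N : ℕ} (Λ : ℕ → Matrix (Fin N) (Fin N) ℝ) (π : Fin N → ℝ) (hπpos : ∀ i, 0 < π i)
    (x n m : ℕ) (hm : 1 ≤ m) :
    prob Λ π n (fun _J C =>
        (∀ k, 0 < k → k < n → 0 < (x : ℤ) + k - S C k) ∧ (x : ℤ) + n - S C n = m) =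
      prob (lamTilde Λ π) π n (fun _J C =>
        (∀ k, k < n → (k : ℤ) - S C k < (m : ℤ)) ∧ (n : ℤ) - S C n = (m : ℤ) - x) := by
  refine (prob_eq_of_perm reversePath (fun p => ?_) (fun p => ?_)).symm
  · exact reversed_passage_iff_survival_comp_rev p.2 hm
  · exact pathWeight_lamTilde Λ (fun i => (hπpos i).ne') p.1 p.2

/-- Duality between survival paths and reversed first passage.  Assume
the environment chain stationary with distribution `π`.  For every `x`, `n ≥ 1` and
`1 ≤ m ≤ x + n`,
`P_π(X_k > 0 ∀ 0 < k < n, X_n = m | X_0 = x) = P_π(τ̃_m^+ ≥ n, X̃_n = m − x)`,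
where `{τ̃_m^+ ≥ n} = {X̃_k < m ∀ k < n}`. -/
theorem survival_reversal_duality
    {N : ℕ} (hN : 1 ≤ N)
    (Λ : ℕ → Matrix (Fin N) (Fin N) ℝ) (P : Matrix (Fin N) (Fin N) ℝ)
    (hΛ : ∀ m i j, 0 ≤ Λ m i j)
    (hP : ∀ i j, HasSum (fun m => Λ m i j) (P i j))
    (hPstoch : ∀ i, ∑ j, P i j = 1)
    (π : Fin N → ℝ) (hπpos : ∀ i, 0 < π i) (hπsum : ∑ i, π i = 1)
    (hπP : ∀ j, ∑ i, π i * P i j = π j)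
    (x n m : ℕ) (hn : 1 ≤ n) (hm : 1 ≤ m) (hmx : m ≤ x + n) :
    prob Λ π n (fun _J C =>
        (∀ k, 0 < k → k < n → 0 < (x : ℤ) + k - S C k) ∧ (x : ℤ) + n - S C n = m) =
      prob (lamTilde Λ π) π n (fun _J C =>
        (∀ k, k < n → (k : ℤ) - S C k < (m : ℤ)) ∧ (n : ℤ) - S C n = (m : ℤ) - x) :=
  survival_reversal_duality_general Λ π hπpos x n m hm

end CMB
end
end
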